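/- Let k ≤ m ≤ n and 1 ≤ l ≤ m with k ≤ m − l. For positive reals r_1,…,r_m and c_1,…,c_n, the limit of F(k,r_1,…,r_m,c_1,…,c_n) as r_1,…,r_l all tend to 0 from above equals F(k,r_{l+1},…,r_m,c_1,…,c_n). -/

import Mathlib

/-!
For `|I| < k ≤ m - l` the complement of `I` contains one of the last `m - l` indices, so every
denominator of `F` stays positive when `r₁, …, r_l` are set to `0`; hence `F` is continuous there
and the limit is `F` at `r` with its first `l` rates replaced by `0`. These zero rates can then be
dropped: grouping the subsets `I` by their part among the zero indices, the coefficients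
`(−1)^{k−1−j} C(N−1−j, k−1−j)` collapse, one zero index at a time, by Pascal's rule into those of
the smaller problem.
-/

open Filter

/-- The conjectured formula `F(k,r,c)` for the expected minimum `k`-assignment of a random
exponential matrix with rank 1 rate matrix `(r i * c j)`: the sum over proper subsets
`I ⊊ {1,…,m}` and `J ⊊ {1,…,n}` with `|I| + |J| < k` of
`(−1)^{k−1−|I|−|J|} · C(m+n−1−|I|−|J|, k−1−|I|−|J|) / ((∑_{i∉I} r i)(∑_{j∉J} c j))`. -/
noncomputable def F (k : ℕ) {m n : ℕ} (r : Fin m → ℝ) (c : Fin n → ℝ) : ℝ :=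
  ∑ I : Finset (Fin m), ∑ J : Finset (Fin n),
    if I ≠ Finset.univ ∧ J ≠ Finset.univ ∧ I.card + J.card < k then
      (-1 : ℝ) ^ (k - 1 - I.card - J.card) *
        ((m + n - 1 - I.card - J.card).choose (k - 1 - I.card - J.card) : ℝ) /
        ((∑ i ∈ Iᶜ, r i) * (∑ j ∈ Jᶜ, c j))
    else 0

open Finset

/-- The coefficient of `F` at `|I| + |J| = j`, where `N = m + n`. -/
noncomputable def Fcoeff (N k j : ℕ) : ℝ :=
  if j < k then (-1) ^ (k - 1 - j) * ((N - 1 - j).choose (k - 1 - j) : ℝ) else 0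

theorem Fcoeff_succ_add_Fcoeff_succ {N k : ℕ} (hk : k ≤ N) (j : ℕ) :
    Fcoeff (N + 1) k j + Fcoeff (N + 1) k (j + 1) = Fcoeff N k j := by
  unfold Fcoeff
  rcases lt_trichotomy (j + 1) k with hj | hj | hj
  · obtain ⟨K, rfl⟩ := Nat.exists_eq_add_of_lt hj
    obtain ⟨M, rfl⟩ := Nat.exists_eq_add_of_lt (hj.trans_le hk)
    simp only [show j < j + 1 + K + 1 by omega, hj, if_true,
      show j + 1 + K + 1 - 1 - j = K + 1 by omega, show j + 1 + K + 1 - 1 - (j + 1) = K by omega,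
      show j + 1 + M + 1 + 1 - 1 - j = M + 1 + 1 by omega,
      show j + 1 + M + 1 + 1 - 1 - (j + 1) = M + 1 by omega,
      show j + 1 + M + 1 - 1 - j = M + 1 by omega, Nat.choose_succ_succ (M + 1) K]
    push_cast
    ring
  · subst hj
    simp
  · simp only [show ¬ j < k by omega, show ¬ j + 1 < k by omega, if_false, add_zero]

theorem sum_powerset_Fcoeff {α : Type*} [DecidableEq α] (s : Finset α) {N k : ℕ} (hk : k ≤ N)
    (j : ℕ) : ∑ A ∈ s.powerset, Fcoeff (#s + N) k (#A + j) = Fcoeff N k j := by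
  induction s using Finset.induction_on generalizing N j with
  | empty => simp
  | insert a s ha ih =>
    have hinsert : ∀ A ∈ s.powerset, Fcoeff (#s + 1 + N) k (#(insert a A) + j) =
        Fcoeff (#s + (N + 1)) k (#A + (j + 1)) := fun A hA => by
      rw [card_insert_of_notMem fun h => ha (mem_powerset.1 hA h)]
      ring_nf
    rw [sum_powerset_insert ha, card_insert_of_notMem ha, sum_congr rfl hinsert,
      show #s + 1 + N = #s + (N + 1) by ring, ih (by omega), ih (by omega),
      Fcoeff_succ_add_Fcoeff_succ hk]

section

variable {ι ι' κ : Type*} [Fintype ι] [Fintype ι'] [Fintype κ] [DecidableEq ι] [DecidableEq ι']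
  [DecidableEq κ]

noncomputable def F' (k : ℕ) (r : ι → ℝ) (c : κ → ℝ) : ℝ :=
  ∑ I : Finset ι, ∑ J : Finset κ,
    Fcoeff (Fintype.card ι + Fintype.card κ) k (#I + #J) / ((∑ i ∈ Iᶜ, r i) * ∑ j ∈ Jᶜ, c j)

/-- The conditions `I ≠ univ`, `J ≠ univ` in `F` are redundant, as the corresponding
denominators vanish and `x / 0 = 0`. -/
theorem F_eq_F' (k : ℕ) {m n : ℕ} (r : Fin m → ℝ) (c : Fin n → ℝ) : F k r c = F' k r c := by
  refine sum_congr rfl fun I _ => sum_congr rfl fun J _ => ?_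
  simp only [Fcoeff, Fintype.card_fin, ite_div, zero_div]
  by_cases hI : I = univ
  · simp [hI]
  by_cases hJ : J = univ
  · simp [hJ]
  simp only [ne_eq, hI, hJ, not_false_eq_true, true_and, Nat.sub_sub, add_assoc]

theorem F'_comp_equiv (k : ℕ) (e : ι ≃ ι') (r : ι' → ℝ) (c : κ → ℝ) :
    F' k (r ∘ e) c = F' k r c := by
  unfold F'
  rw [Fintype.card_congr e]
  refine Fintype.sum_equiv e.finsetCongr _ _ fun I => sum_congr rfl fun J _ => ?_
  have hcompl : (e.finsetCongr I)ᶜ = Iᶜ.map e.toEmbedding := by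
    ext; simp [Equiv.finsetCongr_apply]
  rw [hcompl, sum_map, Equiv.finsetCongr_apply, card_map]
  rfl

theorem sum_compl_sumElim_zero (I : Finset (ι ⊕ ι')) (r : ι' → ℝ) :
    ∑ x ∈ Iᶜ, Sum.elim 0 r x = ∑ b ∈ I.toRightᶜ, r b := by
  rw [sum_sum_eq_sum_toLeft_add_sum_toRight]
  have : Iᶜ.toRight = I.toRightᶜ := by ext; simp
  simp [this]

theorem F'_sumElim_zero {k : ℕ} (r : ι' → ℝ) (c : κ → ℝ)
    (hk : k ≤ Fintype.card ι' + Fintype.card κ) :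
    F' k (Sum.elim (0 : ι → ℝ) r) c = F' k r c := by
  unfold F'
  rw [← Fintype.sum_equiv sumEquiv.symm.toEquiv (fun AB => _) _ fun _ => rfl,
    Fintype.sum_prod_type, sum_comm]
  refine sum_congr rfl fun B _ => ?_
  rw [sum_comm]
  refine sum_congr rfl fun J _ => ?_
  simp only [OrderIso.coe_toEquiv, sumEquiv_symm_apply, sum_compl_sumElim_zero, toRight_disjSum,
    card_disjSum, Fintype.card_sum, ← sum_div, add_assoc]
  congr 1
  simpa using sum_powerset_Fcoeff (univ : Finset ι) hk (#B + #J)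

theorem continuousAt_F' {k : ℕ} {r : ι → ℝ} (c : κ → ℝ)
    (hr : ∀ I : Finset ι, #I < k → ∑ i ∈ Iᶜ, r i ≠ 0) :
    ContinuousAt (fun r : ι → ℝ => F' k r c) r := by
  unfold F'
  refine tendsto_finsetSum _ fun I _ => tendsto_finsetSum _ fun J _ => ?_
  -- `c` needs no condition: `x / (D * C) = x / C / D` and only `D` depends on `r`.
  simp only [div_mul_eq_div_div_swap]
  by_cases hIJ : #I + #J < k
  · exact continuousAt_const.div (by fun_prop) (hr I (by omega))
  · simp [Fcoeff, hIJ]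

end

/-- If `k ≤ m − l`, the limit of `F(k, r₁,…,r_m, c)` as the first `l` rates `r₁,…,r_l`
tend to `0` from above is `F(k, r_{l+1},…,r_m, c)`. -/
theorem F_limit_small_k (k m n l : ℕ) (hlm : l ≤ m)
    (hkml : k ≤ m - l) (r : Fin m → ℝ) (c : Fin n → ℝ) (hr : ∀ i, 0 < r i) :
    Tendsto
      (fun ρ : Fin l → ℝ =>
        F k (fun i : Fin m => if h : (i : ℕ) < l then ρ ⟨i, h⟩ else r i) c)
      (nhdsWithin 0 {ρ | ∀ i, 0 < ρ i})
      (nhds (F k (fun i : Fin (m - l) => r ⟨(i : ℕ) + l, by have := i.isLt; omega⟩) c)) := by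
  set r' : Fin (m - l) → ℝ := fun i => r ⟨(i : ℕ) + l, by have := i.isLt; omega⟩
  have hsplit : ∀ ρ : Fin l → ℝ,
      F k (fun i : Fin m => if h : (i : ℕ) < l then ρ ⟨i, h⟩ else r i) c =
        F' k (Sum.elim ρ r') c := by
    intro ρ
    rw [F_eq_F', ← F'_comp_equiv k (finSumFinEquiv.trans (finCongr (Nat.add_sub_cancel' hlm)))]
    congr 1
    ext (a | b)
    · simp
    · rw [Function.comp_apply, dif_neg (by simp)]
      exact congrArg r (Fin.ext (by simp [add_comm]))
  have hpos : ∀ I : Finset (Fin l ⊕ Fin (m - l)), #I < k → ∑ x ∈ Iᶜ, Sum.elim 0 r' x ≠ 0 := by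
    intro I hI
    rw [sum_compl_sumElim_zero]
    refine (sum_pos (fun b _ => hr _) ?_).ne'
    rw [← card_pos, card_compl, Fintype.card_fin]
    have hright : #I.toRight ≤ #I := card_toRight_le
    omega
  have hk : k ≤ Fintype.card (Fin (m - l)) + Fintype.card (Fin n) := by
    simp only [Fintype.card_fin]
    omega
  simp_rw [hsplit, F_eq_F', ← F'_sumElim_zero (ι := Fin l) r' c hk]
  refine Tendsto.mono_left ?_ nhdsWithin_le_nhds
  have hcont : Continuous fun ρ : Fin l → ℝ => Sum.elim ρ r' := continuous_pi fun
    | .inl a => continuous_apply a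
    | .inr _ => continuous_const
  exact (continuousAt_F' c hpos).tendsto.comp (hcont.tendsto 0)
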